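/- Let d ≥ 2 and n ≥ 1 be integers and let u, v ∈ [0,1]^n. Then the trace norm between the qudit-encoded pure-state density matrices is bounded below as ‖ρ(u) − ρ(v)‖₁ ≥ 2√( 1 − cos^{2n(d−1)}( (π/(2n)) · ∑_{i=1}^n |u_i − v_i| ) ). Consequently, if g₁ maps a latent space into [0,1]^n with modulus of continuity ω₁ (i.e., ∑_i |g₁(z)_i − g₁(z')_i| ≤ ω₁(‖z − z'‖₂) for all z, z'), any modulus of continuity ω of the composed map z ↦ ρ(g₁(z)) that is tight must satisfy ω(τ) ≥ √(1 − cos^{2n(d−1)}( (π/(2n)) ω₁(τ) )) for all τ ≥ 0. -/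

import Mathlib

open MeasureTheory Metric Finset
open scoped ComplexOrder

noncomputable section

/-- Trace norm of a complex square matrix: the trace of the positive semidefinite
square root of `Aᴴ * A`. -/
def traceNorm {m : Type*} [Fintype m] [DecidableEq m] (A : Matrix m m ℂ) : ℝ :=
  (((Matrix.posSemidef_conjTranspose_mul_self A).1.eigenvectorUnitary.1 *
      Matrix.diagonal (((↑) : ℝ → ℂ) ∘ (√·) ∘ (Matrix.posSemidef_conjTranspose_mul_self A).1.eigenvalues) *
      (star (Matrix.posSemidef_conjTranspose_mul_self A).1.eigenvectorUnitary :
        Matrix m m ℂ)).trace).re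

/-- Qudit encoding of a pixel value `u ∈ [0,1]`: the `j`-th component (0-indexed) is
`√(binom (d-1) j) · cos^{d-1-j}(πu/2) · sin^j(πu/2)`. -/
def quditVec (d : ℕ) (u : ℝ) : Fin d → ℂ := fun j =>
  (Real.sqrt ((d - 1).choose j) *
    Real.cos (Real.pi * u / 2) ^ (d - 1 - (j : ℕ)) *
    Real.sin (Real.pi * u / 2) ^ (j : ℕ) : ℝ)

/-- Encoded product pure state `|Φ(u)⟩ = φ_d(u_1) ⊗ ⋯ ⊗ φ_d(u_n)`, with `(ℂ^d)^{⊗n}`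
realized as functions `(Fin n → Fin d) → ℂ`. -/
def encState (d n : ℕ) (u : Fin n → ℝ) : (Fin n → Fin d) → ℂ := fun f =>
  ∏ i, quditVec d (u i) (f i)

/-- Density matrix `ρ(u) = |Φ(u)⟩⟨Φ(u)|` of the encoded state. -/
def encRho (d n : ℕ) (u : Fin n → ℝ) :
    Matrix (Fin n → Fin d) (Fin n → Fin d) ℂ := fun a b =>
  encState d n u a * star (encState d n u b)

/-!
Both states are pure, so `ρ(u) - ρ(v)` is a rank-two Hermitian matrix whose trace norm is
`2 √(1 - |⟨Φ(u), Φ(v)⟩|²)`. The overlap factorises over the qudits, and by the binomial theorem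
`⟨φ_d(u), φ_d(v)⟩ = cos^{d-1}(π(u - v)/2)`. With `x_i = π|u_i - v_i|/2 ∈ [0, π/2]`, AM-GM and
Jensen's inequality for the concave cosine give `∏ cos x_i ≤ cos^n((∑ x_i)/n)`, which is the
first bound. The second follows by evaluating the first at a pair of points attaining `ω₁ τ`.
-/

open Matrix Real

section TraceNorm

variable {ι : Type*} [Fintype ι]

theorem vecMulVec_star_mul_vecMulVec_star (a b c e : ι → ℂ) :
    vecMulVec a (star b) * vecMulVec c (star e) = (star b ⬝ᵥ c) • vecMulVec a (star e) := by
  rw [vecMulVec_mul_vecMulVec, vecMulVec_smul]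

variable [DecidableEq ι]

open scoped MatrixOrder in
theorem traceNorm_eq_re_trace_of_mul_self {A B : Matrix ι ι ℂ} (hB : B.PosSemidef)
    (h : B * B = Aᴴ * A) : traceNorm A = B.trace.re := by
  have hAA := posSemidef_conjTranspose_mul_self A
  have hcfc := hAA.1.cfc_eq Real.sqrt
  rw [IsHermitian.cfc, Unitary.conjStarAlgAut_apply] at hcfc
  have hsqrt : cfc Real.sqrt (Aᴴ * A) = B := by
    rw [← cfcₙ_eq_cfc, ← CFC.sqrt_eq_real_sqrt _ hAA.nonneg]
    exact CFC.sqrt_unique h hB.nonneg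
  rw [traceNorm, ← hsqrt, hcfc]
  rfl

-- The square root of `AᴴA` is `AᴴA / √t`.
theorem traceNorm_eq_re_trace_div_sqrt {A : Matrix ι ι ℂ} {t : ℝ} (ht : 0 ≤ t)
    (h : (Aᴴ * A) * (Aᴴ * A) = (t : ℂ) • (Aᴴ * A)) :
    traceNorm A = (Aᴴ * A).trace.re / √t := by
  have hpsd := posSemidef_conjTranspose_mul_self A
  rw [traceNorm_eq_re_trace_of_mul_self (B := (((√t)⁻¹ : ℝ) : ℂ) • (Aᴴ * A))
    (hpsd.smul (Complex.zero_le_real.mpr (by positivity))), trace_smul, smul_eq_mul,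
    Complex.re_ofReal_mul, inv_mul_eq_div]
  rw [smul_mul_smul_comm, h, smul_smul, ← Complex.ofReal_mul, ← Complex.ofReal_mul]
  rcases ht.eq_or_lt with rfl | htpos
  · rw [Complex.ofReal_zero, zero_smul] at h
    have hzero : Aᴴ * A = 0 := conjTranspose_mul_self_eq_zero.mp (by rwa [hpsd.1.eq])
    rw [hzero, smul_zero]
  · rw [← mul_inv, Real.mul_self_sqrt ht, inv_mul_cancel₀ htpos.ne', Complex.ofReal_one,
      one_smul]

theorem traceNorm_vecMulVec_sub_vecMulVec (a b : ι → ℂ) (s : ℝ) (ha : star a ⬝ᵥ a = 1)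
    (hb : star b ⬝ᵥ b = 1) (hab : star a ⬝ᵥ b = s) :
    traceNorm (vecMulVec a (star a) - vecMulVec b (star b)) = 2 * √(1 - s ^ 2) := by
  set A := vecMulVec a (star a) - vecMulVec b (star b)
  have hba : star b ⬝ᵥ a = s := by
    rw [star_dotProduct, hab, Complex.star_def, Complex.conj_ofReal]
  have hM : Aᴴ * A = vecMulVec a (star a) + vecMulVec b (star b)
      - (s : ℂ) • (vecMulVec a (star b) + vecMulVec b (star a)) := by
    simp only [A, conjTranspose_sub, conjTranspose_vecMulVec, star_star, sub_mul, mul_sub,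
      vecMulVec_star_mul_vecMulVec_star, ha, hb, hab, hba, one_smul]
    module
  have hMM : (Aᴴ * A) * (Aᴴ * A) = ((1 - s ^ 2 : ℝ) : ℂ) • (Aᴴ * A) := by
    rw [hM]
    simp only [sub_mul, mul_sub, add_mul, mul_add, smul_mul_assoc, mul_smul_comm,
      vecMulVec_star_mul_vecMulVec_star, ha, hb, hab, hba, one_smul]
    push_cast
    module
  have htrace : (Aᴴ * A).trace = ((2 * (1 - s ^ 2) : ℝ) : ℂ) := by
    rw [hM]
    simp only [trace_sub, trace_add, trace_smul, trace_vecMulVec, dotProduct_comm _ (star _),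
      ha, hb, hab, hba]
    push_cast
    ring
  have ht : 0 ≤ 1 - s ^ 2 := by
    have := (posSemidef_conjTranspose_mul_self A).trace_nonneg
    rw [htrace, Complex.zero_le_real] at this
    linarith
  rw [traceNorm_eq_re_trace_div_sqrt ht hMM, htrace, Complex.ofReal_re, mul_div_assoc,
    Real.div_sqrt]

end TraceNorm

theorem dotProduct_star_prod {ι κ R : Type*} [Fintype ι] [DecidableEq ι] [Fintype κ]
    [CommSemiring R] [StarRing R] (x y : ι → κ → R) :
    star (fun f : ι → κ => ∏ i, x i (f i)) ⬝ᵥ (fun f => ∏ i, y i (f i))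
      = ∏ i, star (x i) ⬝ᵥ y i := by
  simp only [dotProduct, Pi.star_apply]
  rw [Finset.prod_univ_sum]
  simp [star_prod, ← Finset.prod_mul_distrib]

theorem dotProduct_star_quditVec {d : ℕ} (hd : d ≠ 0) (u v : ℝ) :
    star (quditVec d u) ⬝ᵥ quditVec d v = ((cos (π * u / 2 - π * v / 2) ^ (d - 1) : ℝ) : ℂ) := by
  obtain ⟨m, rfl⟩ := Nat.exists_eq_add_one_of_ne_zero hd
  simp only [dotProduct, quditVec, Pi.star_apply, Complex.star_def, Complex.conj_ofReal,
    ← Complex.ofReal_mul, ← Complex.ofReal_sum, Nat.add_sub_cancel]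
  congr 1
  rw [cos_sub, add_comm (cos _ * cos _), add_pow, Finset.sum_range]
  congr! 1 with j
  have hchoose := Real.mul_self_sqrt (Nat.cast_nonneg (α := ℝ) (m.choose j))
  linear_combination (sin (π * u / 2) * sin (π * v / 2)) ^ (j : ℕ)
    * (cos (π * u / 2) * cos (π * v / 2)) ^ (m - j) * hchoose

theorem dotProduct_star_encState {d : ℕ} (hd : d ≠ 0) (n : ℕ) (u v : Fin n → ℝ) :
    star (encState d n u) ⬝ᵥ encState d n v
      = ((∏ i, cos (π * u i / 2 - π * v i / 2) ^ (d - 1) : ℝ) : ℂ) := by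
  rw [Complex.ofReal_prod]
  simp only [← dotProduct_star_quditVec hd]
  exact dotProduct_star_prod _ _

section MeanInequalities

open Fintype

variable {ι : Type*} [Fintype ι]

theorem prod_le_mean_pow (z : ι → ℝ) (hz : ∀ i, 0 ≤ z i) :
    ∏ i, z i ≤ ((∑ i, z i) / card ι) ^ card ι := by
  rcases isEmpty_or_nonempty ι with hι | hι
  · simp
  have hcard : (card ι : ℝ) ≠ 0 := by positivity
  have hamgm := Real.geom_mean_le_arith_mean Finset.univ (fun _ => 1) z (by simp)
    (by simpa using Fintype.card_pos) fun i _ => hz i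
  simp only [rpow_one, Finset.sum_const, Finset.card_univ, nsmul_eq_mul, mul_one,
    one_mul] at hamgm
  calc ∏ i, z i = ((∏ i, z i) ^ (card ι : ℝ)⁻¹) ^ card ι := by
        rw [← rpow_natCast, ← rpow_mul (Finset.prod_nonneg fun i _ => hz i),
          inv_mul_cancel₀ hcard, rpow_one]
    _ ≤ ((∑ i, z i) / card ι) ^ card ι :=
        pow_le_pow_left₀ (rpow_nonneg (Finset.prod_nonneg fun i _ => hz i) _) hamgm _

theorem prod_cos_le_cos_mean_pow (x : ι → ℝ) (hx : ∀ i, x i ∈ Set.Icc (-(π / 2)) (π / 2)) :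
    ∏ i, cos (x i) ≤ cos ((∑ i, x i) / card ι) ^ card ι := by
  rcases isEmpty_or_nonempty ι with hι | hι
  · simp
  have hcos : ∀ i, 0 ≤ cos (x i) := fun i => cos_nonneg_of_mem_Icc (hx i)
  refine (prod_le_mean_pow _ hcos).trans (pow_le_pow_left₀ ?_ ?_ _)
  · exact div_nonneg (Finset.sum_nonneg fun i _ => hcos i) (Nat.cast_nonneg _)
  have hjensen := strictConcaveOn_cos_Icc.concaveOn.le_map_sum (t := Finset.univ)
    (w := fun _ => (card ι : ℝ)⁻¹) (p := x) (fun _ _ => by positivity) (by simp)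
    fun i _ => hx i
  simpa only [smul_eq_mul, inv_mul_eq_div, ← Finset.sum_div] using hjensen

end MeanInequalities

theorem traceNorm_encRho_sub {d : ℕ} (hd : d ≠ 0) (n : ℕ) (u v : Fin n → ℝ) :
    traceNorm (encRho d n u - encRho d n v)
      = 2 * √(1 - (∏ i, cos (π * u i / 2 - π * v i / 2) ^ (d - 1)) ^ 2) := by
  have hnorm : ∀ w, star (encState d n w) ⬝ᵥ encState d n w = 1 := fun w => by
    simp [dotProduct_star_encState hd]
  exact traceNorm_vecMulVec_sub_vecMulVec _ _ _ (hnorm u) (hnorm v)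
    (dotProduct_star_encState hd n u v)

theorem two_mul_sqrt_le_traceNorm_encRho_sub {d : ℕ} (hd : d ≠ 0) {n : ℕ} {u v : Fin n → ℝ}
    (hu : ∀ i, u i ∈ Set.Icc (0 : ℝ) 1) (hv : ∀ i, v i ∈ Set.Icc (0 : ℝ) 1) :
    2 * √(1 - cos (π / (2 * n) * ∑ i, |u i - v i|) ^ (2 * n * (d - 1)))
      ≤ traceNorm (encRho d n u - encRho d n v) := by
  set x : Fin n → ℝ := fun i => |π * u i / 2 - π * v i / 2|
  have hx : ∀ i, x i = π / 2 * |u i - v i| := fun i => by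
    rw [show x i = |π / 2 * (u i - v i)| by simp only [x]; ring_nf, abs_mul,
      abs_of_pos (by positivity)]
  have hx_mem : ∀ i, x i ∈ Set.Icc (-(π / 2)) (π / 2) := fun i => by
    have hdist : |u i - v i| ≤ 1 :=
      abs_sub_le_iff.mpr ⟨by linarith [(hu i).2, (hv i).1], by linarith [(hu i).1, (hv i).2]⟩
    rw [hx]
    constructor <;> nlinarith [abs_nonneg (u i - v i), pi_pos]
  have hmean : (∑ i, x i) / Fintype.card (Fin n) = π / (2 * n) * ∑ i, |u i - v i| := by
    rw [Fintype.sum_congr _ _ hx, ← Finset.mul_sum, Fintype.card_fin]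
    ring
  rw [traceNorm_encRho_sub hd]
  gcongr
  calc (∏ i, cos (π * u i / 2 - π * v i / 2) ^ (d - 1)) ^ 2
      = (∏ i, cos (x i)) ^ (2 * (d - 1)) := by
        simp only [x, cos_abs, Finset.prod_pow, ← pow_mul, mul_comm]
    _ ≤ (cos ((∑ i, x i) / Fintype.card (Fin n)) ^ n) ^ (2 * (d - 1)) := by
        gcongr
        · exact Finset.prod_nonneg fun i _ => cos_nonneg_of_mem_Icc (hx_mem i)
        · simpa using prod_cos_le_cos_mean_pow x hx_mem
    _ = cos (π / (2 * n) * ∑ i, |u i - v i|) ^ (2 * n * (d - 1)) := by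
        rw [hmean, ← pow_mul]
        ring_nf

theorem stmt8_general {Z : Type*} [MetricSpace Z] (d n : ℕ) (hd : 2 ≤ d) :
    (∀ u v : Fin n → ℝ, (∀ i, u i ∈ Set.Icc (0 : ℝ) 1) → (∀ i, v i ∈ Set.Icc (0 : ℝ) 1) →
      2 * Real.sqrt (1 - Real.cos (Real.pi / (2 * n) * ∑ i, |u i - v i|) ^ (2 * n * (d - 1)))
        ≤ traceNorm (encRho d n u - encRho d n v)) ∧
    (∀ (g₁ : Z → Fin n → ℝ) (ω₁ ω : ℝ → ℝ),
      (∀ z i, g₁ z i ∈ Set.Icc (0 : ℝ) 1) →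
      -- `ω₁` is a modulus of continuity of `g₁` in the `ℓ¹` norm on the image
      (∀ z z', ∑ i, |g₁ z i - g₁ z' i| ≤ ω₁ (dist z z')) →
      -- `ω` is a modulus of continuity of the composed map `z ↦ ρ(g₁(z))`
      (∀ z z', traceNorm (encRho d n (g₁ z) - encRho d n (g₁ z')) ≤ ω (dist z z')) →
      -- tightness: the bound `ω₁` is attained at every distance scale `τ`
      (∀ τ : ℝ, 0 ≤ τ → ∃ z z', dist z z' = τ ∧ ∑ i, |g₁ z i - g₁ z' i| = ω₁ τ) →
      ∀ τ : ℝ, 0 ≤ τ →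
        Real.sqrt (1 - Real.cos (Real.pi / (2 * n) * ω₁ τ) ^ (2 * n * (d - 1))) ≤ ω τ) := by
  have hd₀ : d ≠ 0 := by omega
  refine ⟨fun u v hu hv => two_mul_sqrt_le_traceNorm_encRho_sub hd₀ hu hv, ?_⟩
  intro g₁ ω₁ ω hg _ hω htight τ hτ
  obtain ⟨z, z', rfl, hω₁⟩ := htight τ hτ
  have hbound := two_mul_sqrt_le_traceNorm_encRho_sub hd₀ (hg z) (hg z')
  rw [hω₁] at hbound
  linarith [hω z z',
    Real.sqrt_nonneg (1 - cos (π / (2 * n) * ω₁ (dist z z')) ^ (2 * n * (d - 1)))]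

/-- lower bound on the trace norm between qudit-encoded states, and the
induced lower bound on any tight modulus of continuity of the composed generator. -/
theorem stmt8 {Z : Type*} [MetricSpace Z] (d n : ℕ) (hd : 2 ≤ d) (hn : 1 ≤ n) :
    (∀ u v : Fin n → ℝ, (∀ i, u i ∈ Set.Icc (0 : ℝ) 1) → (∀ i, v i ∈ Set.Icc (0 : ℝ) 1) →
      2 * Real.sqrt (1 - Real.cos (Real.pi / (2 * n) * ∑ i, |u i - v i|) ^ (2 * n * (d - 1)))
        ≤ traceNorm (encRho d n u - encRho d n v)) ∧
    (∀ (g₁ : Z → Fin n → ℝ) (ω₁ ω : ℝ → ℝ),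
      (∀ z i, g₁ z i ∈ Set.Icc (0 : ℝ) 1) →
      -- `ω₁` is a modulus of continuity of `g₁` in the `ℓ¹` norm on the image
      (∀ z z', ∑ i, |g₁ z i - g₁ z' i| ≤ ω₁ (dist z z')) →
      -- `ω` is a modulus of continuity of the composed map `z ↦ ρ(g₁(z))`
      (∀ z z', traceNorm (encRho d n (g₁ z) - encRho d n (g₁ z')) ≤ ω (dist z z')) →
      -- tightness: the bound `ω₁` is attained at every distance scale `τ`
      (∀ τ : ℝ, 0 ≤ τ → ∃ z z', dist z z' = τ ∧ ∑ i, |g₁ z i - g₁ z' i| = ω₁ τ) →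
      ∀ τ : ℝ, 0 ≤ τ →
        Real.sqrt (1 - Real.cos (Real.pi / (2 * n) * ω₁ τ) ^ (2 * n * (d - 1))) ≤ ω τ) :=
  stmt8_general d n hd

end
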